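/- Let V, W be n-graded vector spaces over a field 𝕂 of characteristic 0 and let E be the ℤ×ℤⁿ-graded vector space with E^{(0,*)} = V, E^{(1,*)} = W and E^{(k,*)} = 0 otherwise. Then the homogeneous components of M(E) decompose as: M^{(k,q,*)}(E) = 0 for q > 1; M^{(k,1,*)}(E) ≅ L^{(k+1,*)}(V,W), the space of (k+1)-linear maps V×…×V → W; and M^{(k,0,*)}(E) ≅ M^{(k,*)}(V) ⊕ ⊕^{k+1} L^{(k,*)}(V, End(W)), where L^{(k,*)}(V,End(W)) is the space of k-linear maps V×…×V → End(W). Moreover, under this decomposition a bilinear P ∈ M^{(1,0,…,0)}(E) corresponds exactly to the triple μ + λ + ρ, where μ(X₁,X₂) = P(X₁,X₂) ∈ V, λ(X)Y = P(X,Y) and ρ(X)Y = (−1)^{⟨x,y⟩}P(Y,X) for X,X_i ∈ V and Y ∈ W. -/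

import Mathlib

namespace NR

open Finset

/-- The sign `(-1)^z` for an integer `z`. -/
def sgn (z : ℤ) : ℤ := (-1) ^ z.natAbs

/-- The inner product `⟨x,y⟩ = ∑ i, xⁱ yⁱ` of multidegrees `x, y ∈ ℤⁿ`. -/
def pairZ (n : ℕ) (x y : Fin n → ℤ) : ℤ := ∑ i, x i * y i

/-- The inner product of `(n+1)`-degrees in `ℤ × ℤⁿ`. -/
def prE (n : ℕ) (g h : ℤ × (Fin n → ℤ)) : ℤ := g.1 * h.1 + pairZ n g.2 h.2

/-- Shift a sequence: `shiftSeq f i = (f i, f (i+1), …)`. -/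
def shiftSeq {β : Type*} (f : ℕ → β) (i : ℕ) : ℕ → β := fun m => f (m + i)

/-- Insert the value `c` at slot `i` of the sequence `f`, where `c` replaces
`a` consecutive entries of `f` (the entries `f i, …, f (i+a-1)`). -/
def insSeq {β : Type*} (a i : ℕ) (c : β) (f : ℕ → β) : ℕ → β :=
  fun l => if l < i then f l else if l = i then c else f (l + a - 1)

/-- Permute the first `a` entries of a sequence by `σ`. -/
def permSeq {β : Type*} (a : ℕ) (σ : Equiv.Perm (Fin a)) (f : ℕ → β) : ℕ → β :=
  fun l => if h : l < a then f ((σ ⟨l, h⟩ : Fin a) : ℕ) else f l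

/-- The multigraded sign `sign(σ, x)` of a permutation `σ` of `a` symbols with respect to
the multidegrees `x 0, …, x (a-1)`; it is the ordinary sign times the Koszul sign
collected over the inversions of `σ`. -/
def gsign {G : Type*} (pr : G → G → ℤ) (a : ℕ) (σ : Equiv.Perm (Fin a)) (x : ℕ → G) : ℤ :=
  ((Equiv.Perm.sign σ : ℤˣ) : ℤ) *
    (-1) ^ (∑ p ∈ Finset.univ.filter
        (fun p : Fin a × Fin a => p.1 < p.2 ∧ σ p.2 < σ p.1),
        pr (x ((σ p.1 : Fin a) : ℕ)) (x ((σ p.2 : Fin a) : ℕ))).natAbs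

section Ops

variable {G U : Type*} [AddCommGroup G] [AddCommGroup U]

/-- The operation `j(K₁)K₂` of the multigraded Nijenhuis–Richardson calculus.
`K₁` represents an element of `M^{(k₁,κ₁)}(U)` of arity `a₁ = k₁+1` and `K₂` one of
`M^{(k₂,κ₂)}(U)` of arity `a₂ = k₂+1`; an element of arity `a` is coded as a function
taking the sequence of multidegrees of the (homogeneous) arguments and the sequence of
arguments, and depending only on the first `a` of them. -/
def jop (pr : G → G → ℤ) (a₁ : ℕ) (κ₁ : G) (a₂ : ℕ) (κ₂ : G)
    (K₁ K₂ : (ℕ → G) → (ℕ → U) → U) : (ℕ → G) → (ℕ → U) → U :=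
  fun x X => ∑ i ∈ Finset.range a₂,
    sgn (((a₁ : ℤ) - 1) * (i : ℤ) + pr κ₁ (κ₂ + ∑ l ∈ Finset.range i, x l)) •
      K₂ (insSeq a₁ i ((∑ m ∈ Finset.range a₁, x (m + i)) + κ₁) x)
         (insSeq a₁ i (K₁ (shiftSeq x i) (shiftSeq X i)) X)

/-- The multigraded bracket `[K₁,K₂]^Δ = j(K₁)K₂ - (-1)^{k₁k₂+⟨κ₁,κ₂⟩} j(K₂)K₁`. -/
def brD (pr : G → G → ℤ) (a₁ : ℕ) (κ₁ : G) (a₂ : ℕ) (κ₂ : G)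
    (K₁ K₂ : (ℕ → G) → (ℕ → U) → U) : (ℕ → G) → (ℕ → U) → U :=
  fun x X => jop pr a₁ κ₁ a₂ κ₂ K₁ K₂ x X
    - sgn (((a₁ : ℤ) - 1) * ((a₂ : ℤ) - 1) + pr κ₁ κ₂) • jop pr a₂ κ₂ a₁ κ₁ K₂ K₁ x X

end Ops

/-- `K` represents a (`a`-linear) element of `M(U)`: it does not depend on the degree
sequence, depends only on the first `a` arguments, and is `𝕂`-multilinear in them. -/
def IsML (𝕂 : Type*) [Field 𝕂] {G U U' : Type*} [AddCommGroup U] [Module 𝕂 U]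
    [AddCommGroup U'] [Module 𝕂 U'] (a : ℕ) (K : (ℕ → G) → (ℕ → U) → U') : Prop :=
  (∀ x x' X, K x X = K x' X) ∧
  (∀ x X X', (∀ i, i < a → X i = X' i) → K x X = K x X') ∧
  (∀ x X i, i < a →
    (∀ u v : U, K x (Function.update X i (u + v))
        = K x (Function.update X i u) + K x (Function.update X i v)) ∧
    (∀ (r : 𝕂) (u : U), K x (Function.update X i (r • u)) = r • K x (Function.update X i u)))

/-- `K ∈ M^{(a-1,κ)}(U)`: an `a`-linear map mapping `U^{x₀} × ⋯ × U^{x_{a-1}}` into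
`U^{x₀+⋯+x_{a-1}+κ}`. -/
def MDeg (𝕂 : Type*) [Field 𝕂] {G U : Type*} [AddCommGroup G] [AddCommGroup U] [Module 𝕂 U]
    (gr : G → Submodule 𝕂 U) (a : ℕ) (κ : G) (K : (ℕ → G) → (ℕ → U) → U) : Prop :=
  IsML 𝕂 a K ∧
  ∀ x X, (∀ i, X i ∈ gr (x i)) → K x X ∈ gr ((∑ i ∈ Finset.range a, x i) + κ)

/-- The multigraded alternator `α` on elements of arity `a`. -/
def alt (𝕂 : Type*) [Field 𝕂] {G U U' : Type*} [AddCommGroup U'] [Module 𝕂 U']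
    (pr : G → G → ℤ) (a : ℕ) (K : (ℕ → G) → (ℕ → U) → U') : (ℕ → G) → (ℕ → U) → U' :=
  fun x X => (a.factorial : 𝕂)⁻¹ •
    ∑ σ : Equiv.Perm (Fin a),
      ((gsign pr a σ x : ℤ) : 𝕂) • K (permSeq a σ x) (permSeq a σ X)

/-- The operation `i(K₁)K₂ = ((k₁+k₂+1)!/((k₁+1)!(k₂+1)!)) α(j(K₁)K₂)`. -/
def iop (𝕂 : Type*) [Field 𝕂] {G U : Type*} [AddCommGroup G] [AddCommGroup U] [Module 𝕂 U]
    (pr : G → G → ℤ) (a₁ : ℕ) (κ₁ : G) (a₂ : ℕ) (κ₂ : G)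
    (K₁ K₂ : (ℕ → G) → (ℕ → U) → U) : (ℕ → G) → (ℕ → U) → U :=
  fun x X =>
    (((a₁ + a₂ - 1).factorial : 𝕂) / ((a₁.factorial : 𝕂) * (a₂.factorial : 𝕂))) •
      alt 𝕂 pr (a₁ + a₂ - 1) (jop pr a₁ κ₁ a₂ κ₂ K₁ K₂) x X

/-- The multigraded Nijenhuis–Richardson bracket
`[K₁,K₂]^∧ = i(K₁)K₂ - (-1)^{k₁k₂+⟨κ₁,κ₂⟩} i(K₂)K₁`. -/
def brW (𝕂 : Type*) [Field 𝕂] {G U : Type*} [AddCommGroup G] [AddCommGroup U] [Module 𝕂 U]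
    (pr : G → G → ℤ) (a₁ : ℕ) (κ₁ : G) (a₂ : ℕ) (κ₂ : G)
    (K₁ K₂ : (ℕ → G) → (ℕ → U) → U) : (ℕ → G) → (ℕ → U) → U :=
  fun x X => iop 𝕂 pr a₁ κ₁ a₂ κ₂ K₁ K₂ x X
    - sgn (((a₁ : ℤ) - 1) * ((a₂ : ℤ) - 1) + pr κ₁ κ₂) • iop 𝕂 pr a₂ κ₂ a₁ κ₁ K₂ K₁ x X

/-- `K ∈ A^{(a-1,κ)}(U) = α(M^{(a-1,κ)}(U))`, i.e. `K ∈ M^{(a-1,κ)}(U)` and `K` is fixed by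
the multigraded alternator (on homogeneous arguments). -/
def ADeg (𝕂 : Type*) [Field 𝕂] {G U : Type*} [AddCommGroup G] [AddCommGroup U] [Module 𝕂 U]
    (pr : G → G → ℤ) (gr : G → Submodule 𝕂 U) (a : ℕ) (κ : G)
    (K : (ℕ → G) → (ℕ → U) → U) : Prop :=
  MDeg 𝕂 gr a κ K ∧
  ∀ x X, (∀ i, X i ∈ gr (x i)) → alt 𝕂 pr a K x X = K x X

/-- The bilinear map `P` coded as an element of arity `2`. -/
def KofBil {𝕂 : Type*} [Field 𝕂] {G U : Type*} [AddCommGroup U] [Module 𝕂 U]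
    (P : U →ₗ[𝕂] U →ₗ[𝕂] U) : (ℕ → G) → (ℕ → U) → U :=
  fun _ X => P (X 0) (X 1)


section VW

variable {𝕂 : Type} [Field 𝕂] {V W : Type} [AddCommGroup V] [Module 𝕂 V]
  [AddCommGroup W] [Module 𝕂 W]

/-- The `(ℤ × ℤⁿ)`-grading of `E = V ⊕ W` with `E^{(0,x)} = V^x`, `E^{(1,x)} = W^x` and
`E^{(q,x)} = 0` otherwise. -/
def EgrP (𝕂 : Type) [Field 𝕂] (n : ℕ) {V W : Type} [AddCommGroup V] [Module 𝕂 V]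
    [AddCommGroup W] [Module 𝕂 W] (grV : (Fin n → ℤ) → Submodule 𝕂 V)
    (grW : (Fin n → ℤ) → Submodule 𝕂 W) : ℤ × (Fin n → ℤ) → Submodule 𝕂 (V × W) :=
  fun g =>
    if g.1 = 0 then (grV g.2).prod (⊥ : Submodule 𝕂 W)
    else if g.1 = 1 then (⊥ : Submodule 𝕂 V).prod (grW g.2)
    else ⊥

/-- `μ(X₁,X₂) = P(X₁,X₂)` (the `V`-part of `P` on `V × V`). -/
def bmu (P : (V × W) →ₗ[𝕂] (V × W) →ₗ[𝕂] (V × W)) (X₁ X₂ : V) : V :=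
  (P (X₁, 0) (X₂, 0)).1

/-- `λ(X)Y = P(X,Y)` for `X ∈ V`, `Y ∈ W`. -/
def blam (P : (V × W) →ₗ[𝕂] (V × W) →ₗ[𝕂] (V × W)) (X : V) (Y : W) : W :=
  (P (X, 0) ((0 : V), Y)).2

/-- `π(X)Y = P(X,Y)` for `X ∈ V`, `Y ∈ W` (the representation in the Lie case). -/
def bpi (P : (V × W) →ₗ[𝕂] (V × W) →ₗ[𝕂] (V × W)) (X : V) (Y : W) : W :=
  (P (X, 0) ((0 : V), Y)).2

/-- `ρ(X)Y = (−1)^{⟨x,y⟩} P(Y,X)` for homogeneous `X ∈ V^x`, `Y ∈ W^y`. -/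
def brho (n : ℕ) (P : (V × W) →ₗ[𝕂] (V × W) →ₗ[𝕂] (V × W))
    (x y : Fin n → ℤ) (X : V) (Y : W) : W :=
  sgn (pairZ n x y) • (P ((0 : V), Y) (X, (0 : W))).2

/-- A `k`-linear map `C ∈ L^{(k,c)}(V,W)` of weight `c` (coded as in `IsML`,
with values in `W`). -/
def LDeg (𝕂 : Type) [Field 𝕂] (n : ℕ) {V W : Type} [AddCommGroup V] [Module 𝕂 V]
    [AddCommGroup W] [Module 𝕂 W]
    (grV : (Fin n → ℤ) → Submodule 𝕂 V) (grW : (Fin n → ℤ) → Submodule 𝕂 W)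
    (a : ℕ) (c : Fin n → ℤ) (C : (ℕ → (Fin n → ℤ)) → (ℕ → V) → W) : Prop :=
  IsML 𝕂 a C ∧
  ∀ x X, (∀ i, X i ∈ grV (x i)) → C x X ∈ grW ((∑ i ∈ Finset.range a, x i) + c)

/-- A `k`-linear map `V × ⋯ × V → End(W)` of total weight `c`
(an element of `L^{(k,*)}(V, End(W))`). -/
def LEDeg (𝕂 : Type) [Field 𝕂] (n : ℕ) {V W : Type} [AddCommGroup V] [Module 𝕂 V]
    [AddCommGroup W] [Module 𝕂 W]
    (grV : (Fin n → ℤ) → Submodule 𝕂 V) (grW : (Fin n → ℤ) → Submodule 𝕂 W)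
    (a : ℕ) (c : Fin n → ℤ) (C : (ℕ → (Fin n → ℤ)) → (ℕ → V) → W → W) : Prop :=
  (∀ x x' X, C x X = C x' X) ∧
  (∀ x X X', (∀ i, i < a → X i = X' i) → C x X = C x X') ∧
  (∀ x X i, i < a →
    (∀ u v : V, C x (Function.update X i (u + v))
        = C x (Function.update X i u) + C x (Function.update X i v)) ∧
    (∀ (r : 𝕂) (u : V), C x (Function.update X i (r • u)) = r • C x (Function.update X i u))) ∧
  (∀ x X, IsLinearMap 𝕂 (C x X)) ∧
  (∀ x X, (∀ i, X i ∈ grV (x i)) → ∀ (y : Fin n → ℤ) (Y : W), Y ∈ grW y →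
    C x X Y ∈ grW ((∑ i ∈ Finset.range a, x i) + c + y))

/-- The element of `M^{(k-1,(1,c))}(E)` corresponding to `C ∈ L^{(k,c)}(V,W)`. -/
def KCof (n : ℕ) {V W : Type} [AddCommGroup V] [AddCommGroup W]
    (C : (ℕ → (Fin n → ℤ)) → (ℕ → V) → W) :
    (ℕ → ℤ × (Fin n → ℤ)) → (ℕ → V × W) → V × W :=
  fun x X => ((0 : V), C (fun i => (x i).2) (fun i => (X i).1))

/-- The element of `M^{(1,(-1,0))}(E)` corresponding to a multiplication `ν : W × W → W`. -/
def KNu {𝕂 : Type} [Field 𝕂] (n : ℕ) {V W : Type} [AddCommGroup V] [AddCommGroup W]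
    [Module 𝕂 W] (ν : W →ₗ[𝕂] W →ₗ[𝕂] W) :
    (ℕ → ℤ × (Fin n → ℤ)) → (ℕ → V × W) → V × W :=
  fun _ X => ((0 : V), ν (X 0).2 (X 1).2)

/-- Merge slots `i` and `i+1` of a sequence into the single value `c` at slot `i`. -/
def mergeAt {β : Type*} (i : ℕ) (c : β) (f : ℕ → β) : ℕ → β :=
  fun l => if l < i then f l else if l = i then c else f (l + 1)

/-- Delete slot `i` of a sequence. -/
def delAt {β : Type*} (i : ℕ) (f : ℕ → β) : ℕ → β :=
  fun l => if l < i then f l else f (l + 1)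

/-- Prepend the value `c` to a sequence. -/
def consAt {β : Type*} (c : β) (f : ℕ → β) : ℕ → β :=
  fun l => if l = 0 then c else f (l - 1)

/-- Insert the value `c` at slot `p` of a sequence (shifting the later entries). -/
def ins1 {β : Type*} (p : ℕ) (c : β) (f : ℕ → β) : ℕ → β :=
  fun l => if l < p then f l else if l = p then c else f (l - 1)

end VW

/-!
Every nonzero element of `E` has first degree `0` (it lies in `V`) or `1` (it lies in `W`).
Hence a map in `M^{(k,q,*)}(E)` vanishes when `q > 1`; for `q = 1` it only sees arguments
from `V` and takes values in `W`; for `q = 0` it either takes all arguments from `V` and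
values in `V`, or exactly one argument, at some slot `p`, from `W` and values in `W`.
Conversely such pieces assemble into elements of `M(E)`. The pieces are unique because the
gradings of `V` and `W` are exhaustive, and a multilinear map is determined by its values on
homogeneous arguments.
-/

section Seq

variable {β : Type*}

lemma ins1_self (p : ℕ) (c : β) (f : ℕ → β) : ins1 p c f p = c := by
  simp [ins1]

lemma ins1_apply_of_ne {p q : ℕ} (hqp : q ≠ p) (c : β) (f : ℕ → β) :
    ins1 p c f q = f (if q < p then q else q - 1) := by
  simp only [ins1, if_neg hqp]
  split_ifs <;> rfl

lemma ins1_update (p i : ℕ) (c v : β) (f : ℕ → β) :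
    ins1 p c (Function.update f i v)
      = Function.update (ins1 p c f) (if i < p then i else i + 1) v := by
  funext l
  simp only [ins1, Function.update_apply]
  split_ifs <;> first | rfl | omega

lemma update_ins1 (p : ℕ) (c c' : β) (f : ℕ → β) :
    Function.update (ins1 p c f) p c' = ins1 p c' f := by
  funext l
  simp only [ins1, Function.update_apply]
  split_ifs <;> first | rfl | omega

lemma delAt_update_of_ne {p i : ℕ} (hip : i ≠ p) (v : β) (f : ℕ → β) :
    delAt p (Function.update f i v)
      = Function.update (delAt p f) (if i < p then i else i - 1) v := by
  funext l
  simp only [delAt, Function.update_apply]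
  split_ifs <;> first | rfl | omega

lemma delAt_update_self (p : ℕ) (v : β) (f : ℕ → β) :
    delAt p (Function.update f p v) = delAt p f := by
  funext l
  simp only [delAt, Function.update_apply]
  split_ifs <;> first | rfl | omega

lemma delAt_ins1 (p : ℕ) (c : β) (f : ℕ → β) : delAt p (ins1 p c f) = f := by
  funext l
  simp only [delAt, ins1]
  split_ifs <;> first | rfl | omega

lemma sum_range_succ_eq_add_sum_delAt [AddCommMonoid β] {k p : ℕ} (hp : p ≤ k) (f : ℕ → β) :
    ∑ l ∈ range (k + 1), f l = f p + ∑ l ∈ range k, delAt p f l := by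
  rw [← Fin.sum_univ_eq_sum_range, ← Fin.sum_univ_eq_sum_range,
    Fin.sum_univ_succAbove _ ⟨p, Nat.lt_succ_of_le hp⟩]
  congr 1
  refine Fintype.sum_congr _ _ fun l => ?_
  simp only [Fin.succAbove, delAt, Fin.lt_def, Fin.val_castSucc]
  split_ifs <;> rfl

lemma sum_range_succ_ins1 [AddCommMonoid β] {k p : ℕ} (hp : p ≤ k) (c : β) (f : ℕ → β) :
    ∑ l ∈ range (k + 1), ins1 p c f l = c + ∑ l ∈ range k, f l := by
  rw [sum_range_succ_eq_add_sum_delAt hp, ins1_self, delAt_ins1]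

end Seq

section Multilinear

variable {𝕂 : Type*} [Field 𝕂] {G U U' : Type*} [AddCommGroup U] [Module 𝕂 U]
  [AddCommGroup U'] [Module 𝕂 U'] {a : ℕ} {K : (ℕ → G) → (ℕ → U) → U'}

lemma IsML.isLinearMap_update (hK : IsML 𝕂 a K) (x : ℕ → G) (X : ℕ → U) {i : ℕ}
    (hi : i < a) : IsLinearMap 𝕂 (fun u => K x (Function.update X i u)) :=
  ⟨(hK.2.2 x X i hi).1, (hK.2.2 x X i hi).2⟩

lemma IsML.map_coord_zero (hK : IsML 𝕂 a K) (x : ℕ → G) {X : ℕ → U} {i : ℕ}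
    (hi : i < a) (h0 : X i = 0) : K x X = 0 := by
  simpa [← h0] using (hK.isLinearMap_update x X hi).map_zero

lemma IsML.comp {G' U₁ U₂ : Type*} [AddCommGroup U₁] [Module 𝕂 U₁] [AddCommGroup U₂]
    [Module 𝕂 U₂] (hK : IsML 𝕂 a K) (φ : (ℕ → G') → ℕ → G) (f : U₁ →ₗ[𝕂] U)
    (g : U' →ₗ[𝕂] U₂) : IsML 𝕂 a (fun x X => g (K (φ x) (fun i => f (X i)))) := by
  refine ⟨fun x x' X => congrArg g (hK.1 _ _ _),
    fun x X X' h => congrArg g (hK.2.1 _ _ _ fun i hi => by rw [h i hi]), fun x X i hi => ?_⟩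
  have hf : ∀ u, (fun j => f (Function.update X i u j))
      = Function.update (fun j => f (X j)) i (f u) :=
    fun u => funext fun j => Function.apply_update (fun _ => f) X i u j
  have hlin := hK.isLinearMap_update (φ x) (fun j => f (X j)) hi
  exact ⟨fun u v => by simp only [hf, map_add, hlin.map_add],
    fun r u => by simp only [hf, map_smul, hlin.map_smul]⟩

lemma IsML.pi {Y : Type*} {F : (ℕ → G) → (ℕ → U) → Y → U'}
    (hF : ∀ y, IsML 𝕂 a (fun x X => F x X y)) : IsML 𝕂 a F :=
  ⟨fun x x' X => funext fun y => (hF y).1 x x' X,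
    fun x X X' h => funext fun y => (hF y).2.1 x X X' h,
    fun x X i hi => ⟨fun u v => funext fun y => ((hF y).2.2 x X i hi).1 u v,
      fun r u => funext fun y => ((hF y).2.2 x X i hi).2 r u⟩⟩

lemma IsML.add {K' : (ℕ → G) → (ℕ → U) → U'} (hK : IsML 𝕂 a K) (hK' : IsML 𝕂 a K') :
    IsML 𝕂 a (fun x X => K x X + K' x X) := by
  refine ⟨fun x x' X => congrArg₂ (· + ·) (hK.1 x x' X) (hK'.1 x x' X),
    fun x X X' h => congrArg₂ (· + ·) (hK.2.1 x X X' h) (hK'.2.1 x X X' h),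
    fun x X i hi => ?_⟩
  have h := hK.isLinearMap_update x X hi
  have h' := hK'.isLinearMap_update x X hi
  exact ⟨fun u v => by simp only [h.map_add, h'.map_add]; abel,
    fun r u => by simp only [h.map_smul, h'.map_smul, smul_add]⟩

lemma IsML.sum {ι : Type*} (s : Finset ι) {K : ι → (ℕ → G) → (ℕ → U) → U'}
    (hK : ∀ p ∈ s, IsML 𝕂 a (K p)) : IsML 𝕂 a (fun x X => ∑ p ∈ s, K p x X) := by
  classical
  induction s using Finset.induction_on with
  | empty => exact ⟨fun _ _ _ => rfl, fun _ _ _ _ => rfl,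
      fun _ _ _ _ => ⟨fun _ _ => by simp, fun _ _ => by simp⟩⟩
  | insert p s hp ih =>
    simp only [sum_insert hp]
    exact (hK p (mem_insert_self p s)).add (ih fun q hq => hK q (mem_insert_of_mem hq))

lemma IsML.comp_ins1 (hK : IsML 𝕂 (a + 1) K) {p : ℕ} (hp : p ≤ a) (ψ : (ℕ → G) → ℕ → G) (u : U) :
    IsML 𝕂 a (fun x X => K (ψ x) (ins1 p u X)) := by
  refine ⟨fun x x' X => hK.1 _ _ _, fun x X X' h => hK.2.1 _ _ _ fun i hi => ?_,
    fun x X i hi => ?_⟩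
  · simp only [ins1]
    split_ifs <;> first | rfl | exact h _ (by omega)
  · have hi' : (if i < p then i else i + 1) < a + 1 := by split_ifs <;> omega
    simp only [ins1_update]
    exact hK.2.2 _ _ _ hi'

lemma IsML.comp_delAt {F : (ℕ → G) → (ℕ → U) → U → U'} (hF : IsML 𝕂 a F)
    (hlin : ∀ x X, IsLinearMap 𝕂 (F x X)) {p : ℕ} (hp : p ≤ a) :
    IsML 𝕂 (a + 1) (fun x Z => F (delAt p x) (delAt p Z) (Z p)) := by
  refine ⟨fun x x' Z => congrFun (hF.1 (delAt p x) (delAt p x') _) _,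
    fun x Z Z' h => ?_, fun x Z i hi => ?_⟩
  · show F _ _ _ = F _ _ _
    rw [h p (by omega), hF.2.1 _ _ _ fun l hl => ?_]
    simp only [delAt]
    split_ifs <;> exact h _ (by omega)
  · by_cases hip : i = p
    · subst hip
      simp only [delAt_update_self, Function.update_self]
      exact ⟨(hlin _ _).map_add, (hlin _ _).map_smul⟩
    · have hi' : (if i < p then i else i - 1) < a := by split_ifs <;> omega
      simp only [delAt_update_of_ne hip, Function.update_of_ne (Ne.symm hip)]
      have h := hF.isLinearMap_update (delAt p x) (delAt p Z) hi'
      exact ⟨fun u v => congrFun (h.map_add u v) (Z p),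
        fun r u => congrFun (h.map_smul r u) (Z p)⟩

end Multilinear

section Homogeneous

variable {𝕂 : Type*} [Field 𝕂] {ι : Type*} {M N : Type*} [AddCommGroup M] [Module 𝕂 M]
  [AddCommGroup N] [Module 𝕂 N] {gr : ι → Submodule 𝕂 M}

lemma LinearMap.eq_of_eqOn_homogeneous (htop : iSup gr = ⊤) {f g : M →ₗ[𝕂] N}
    (h : ∀ i, ∀ m ∈ gr i, f m = g m) : f = g :=
  LinearMap.ext_on (s := ⋃ i, (gr i : Set M)) (by rw [← Submodule.iSup_eq_span, htop])
    fun m hm => by obtain ⟨i, hi⟩ := Set.mem_iUnion.mp hm; exact h i m hi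

lemma IsLinearMap.eq_of_eqOn_homogeneous (htop : iSup gr = ⊤) {f g : M → N}
    (hf : IsLinearMap 𝕂 f) (hg : IsLinearMap 𝕂 g) (h : ∀ i, ∀ m ∈ gr i, f m = g m) :
    f = g :=
  congrArg DFunLike.coe (LinearMap.eq_of_eqOn_homogeneous htop (f := hf.mk' f) (g := hg.mk' g) h)

lemma LinearMap.eq_zero_of_homogeneous {ι' P : Type*} [AddCommGroup P] [Module 𝕂 P]
    {gr' : ι' → Submodule 𝕂 N} (htop : iSup gr = ⊤) (htop' : iSup gr' = ⊤)
    {B : M →ₗ[𝕂] N →ₗ[𝕂] P} (h : ∀ i j, ∀ m ∈ gr i, ∀ n ∈ gr' j, B m n = 0) : B = 0 :=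
  LinearMap.eq_of_eqOn_homogeneous htop fun i m hm =>
    LinearMap.eq_of_eqOn_homogeneous htop' fun j n hn => h i j m hm n hn

variable {U' : Type*} [AddCommGroup U'] [Module 𝕂 U']

lemma IsML.eq_of_eqOn_homogeneous (htop : iSup gr = ⊤) {a : ℕ}
    {C C' : (ℕ → ι) → (ℕ → M) → U'} (hC : IsML 𝕂 a C) (hC' : IsML 𝕂 a C')
    (h : ∀ x X, (∀ i, X i ∈ gr (x i)) → C x X = C' x X) : C = C' := by
  -- induction on the number `j` of leading slots allowed to be inhomogeneous
  have key : ∀ j ≤ a, ∀ x X, (∀ i, j ≤ i → X i ∈ gr (x i)) → C x X = C' x X := by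
    intro j
    induction j with
    | zero => exact fun _ x X hX => h x X fun i => hX i i.zero_le
    | succ j ih =>
      intro hj x X hX
      have hslot :
          (fun u => C x (Function.update X j u)) = fun u => C' x (Function.update X j u) :=
        IsLinearMap.eq_of_eqOn_homogeneous htop (hC.isLinearMap_update x X hj)
          (hC'.isLinearMap_update x X hj) fun g u hu => by
            rw [hC.1 x (Function.update x j g), hC'.1 x (Function.update x j g)]
            refine ih (by omega) _ _ fun i hi => ?_
            rcases hi.eq_or_lt with rfl | hlt
            · simpa using hu
            · simpa [Function.update_of_ne hlt.ne'] using hX i hlt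
      simpa using congrFun hslot (X j)
  funext x X
  let X₀ : ℕ → M := fun i => if i < a then X i else 0
  have hX₀ : ∀ i < a, X i = X₀ i := fun i hi => by simp [X₀, hi]
  rw [hC.2.1 x X X₀ hX₀, hC'.2.1 x X X₀ hX₀]
  exact key a le_rfl x X₀ fun i hi => by simp [X₀, not_lt.2 hi]

end Homogeneous

section Graded

variable {𝕂 : Type*} [Field 𝕂] {G U : Type*} [AddCommGroup G] [AddCommGroup U] [Module 𝕂 U]
  {gr : G → Submodule 𝕂 U} {a : ℕ} {κ : G}

lemma MDeg.add {K K' : (ℕ → G) → (ℕ → U) → U} (hK : MDeg 𝕂 gr a κ K)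
    (hK' : MDeg 𝕂 gr a κ K') : MDeg 𝕂 gr a κ (fun x X => K x X + K' x X) :=
  ⟨hK.1.add hK'.1, fun x X hX => add_mem (hK.2 x X hX) (hK'.2 x X hX)⟩

lemma MDeg.sum {ι : Type*} (s : Finset ι) {K : ι → (ℕ → G) → (ℕ → U) → U}
    (hK : ∀ p ∈ s, MDeg 𝕂 gr a κ (K p)) : MDeg 𝕂 gr a κ (fun x X => ∑ p ∈ s, K p x X) :=
  ⟨IsML.sum s fun p hp => (hK p hp).1,
    fun x X hX => Submodule.sum_mem _ fun p hp => (hK p hp).2 x X hX⟩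

end Graded

section SumSpace

variable {𝕂 : Type} [Field 𝕂] {n : ℕ} {V W : Type} [AddCommGroup V] [Module 𝕂 V]
  [AddCommGroup W] [Module 𝕂 W] {grV : (Fin n → ℤ) → Submodule 𝕂 V}
  {grW : (Fin n → ℤ) → Submodule 𝕂 W} {g : ℤ × (Fin n → ℤ)} {u : V × W} {c : Fin n → ℤ}
  {K : (ℕ → ℤ × (Fin n → ℤ)) → (ℕ → V × W) → V × W}

lemma mem_EgrP_zero_iff {x : Fin n → ℤ} :
    u ∈ EgrP 𝕂 n grV grW (0, x) ↔ u.1 ∈ grV x ∧ u.2 = 0 := by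
  simp [EgrP]

lemma mem_EgrP_one_iff {y : Fin n → ℤ} :
    u ∈ EgrP 𝕂 n grV grW (1, y) ↔ u.1 = 0 ∧ u.2 ∈ grW y := by
  simp [EgrP]

lemma eq_zero_of_mem_EgrP (h : u ∈ EgrP 𝕂 n grV grW g) (h0 : g.1 ≠ 0) (h1 : g.1 ≠ 1) :
    u = 0 := by
  simpa [EgrP, h0, h1] using h

lemma fst_eq_zero_of_mem_EgrP (h : u ∈ EgrP 𝕂 n grV grW g) (h0 : g.1 ≠ 0) : u.1 = 0 := by
  by_cases h1 : g.1 = 1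
  · exact (mem_EgrP_one_iff.mp (show u ∈ EgrP 𝕂 n grV grW (1, g.2) by rwa [← h1])).1
  · rw [eq_zero_of_mem_EgrP h h0 h1, Prod.fst_zero]

lemma snd_eq_zero_of_mem_EgrP (h : u ∈ EgrP 𝕂 n grV grW g) (h1 : g.1 ≠ 1) : u.2 = 0 := by
  by_cases h0 : g.1 = 0
  · exact (mem_EgrP_zero_iff.mp (show u ∈ EgrP 𝕂 n grV grW (0, g.2) by rwa [← h0])).2
  · rw [eq_zero_of_mem_EgrP h h0 h1, Prod.snd_zero]

lemma fst_mem_of_mem_EgrP (h : u ∈ EgrP 𝕂 n grV grW g) : u.1 ∈ grV g.2 := by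
  by_cases h0 : g.1 = 0
  · exact (mem_EgrP_zero_iff.mp (show u ∈ EgrP 𝕂 n grV grW (0, g.2) by rwa [← h0])).1
  · rw [fst_eq_zero_of_mem_EgrP h h0]
    exact zero_mem _

lemma snd_mem_of_mem_EgrP (h : u ∈ EgrP 𝕂 n grV grW g) : u.2 ∈ grW g.2 := by
  by_cases h1 : g.1 = 1
  · exact (mem_EgrP_one_iff.mp (show u ∈ EgrP 𝕂 n grV grW (1, g.2) by rwa [← h1])).2
  · rw [snd_eq_zero_of_mem_EgrP h h1]
    exact zero_mem _

lemma inl_mem_EgrP {x : Fin n → ℤ} {v : V} (hv : v ∈ grV x) :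
    ((v, 0) : V × W) ∈ EgrP 𝕂 n grV grW (0, x) :=
  mem_EgrP_zero_iff.mpr ⟨hv, rfl⟩

lemma inr_mem_EgrP {y : Fin n → ℤ} {w : W} (hw : w ∈ grW y) :
    ((0, w) : V × W) ∈ EgrP 𝕂 n grV grW (1, y) :=
  mem_EgrP_one_iff.mpr ⟨rfl, hw⟩

lemma sum_add_eq_mk {ι : Type*} (s : Finset ι) (x : ι → ℤ × (Fin n → ℤ)) (q : ℤ)
    (c : Fin n → ℤ) :
    ∑ i ∈ s, x i + (q, c) = (∑ i ∈ s, (x i).1 + q, ∑ i ∈ s, (x i).2 + c) := by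
  ext <;> simp [Prod.fst_sum, Prod.snd_sum]

lemma LEDeg.isML {k : ℕ} {C : (ℕ → (Fin n → ℤ)) → (ℕ → V) → W → W}
    (hC : LEDeg 𝕂 n grV grW k c C) : IsML 𝕂 k C :=
  ⟨hC.1, hC.2.1, hC.2.2.1⟩

/-- An argument of negative first degree is zero; otherwise the value has first degree
`≥ q > 1`. -/
lemma MDeg.eq_zero_of_one_lt {a : ℕ} {q : ℤ} (hq : 1 < q)
    (hK : MDeg 𝕂 (EgrP 𝕂 n grV grW) a (q, c) K) (x : ℕ → ℤ × (Fin n → ℤ)) (X : ℕ → V × W)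
    (hX : ∀ i, X i ∈ EgrP 𝕂 n grV grW (x i)) : K x X = 0 := by
  by_cases hneg : ∃ i < a, (x i).1 < 0
  · obtain ⟨i, hi, hlt⟩ := hneg
    exact hK.1.map_coord_zero x hi (eq_zero_of_mem_EgrP (hX i) (by omega) (by omega))
  · push Not at hneg
    have hpos : 0 ≤ ∑ i ∈ range a, (x i).1 := sum_nonneg fun i hi => hneg i (mem_range.mp hi)
    have hmem := hK.2 x X hX
    rw [sum_add_eq_mk] at hmem
    exact eq_zero_of_mem_EgrP hmem (by dsimp only; omega) (by dsimp only; omega)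

lemma IsML.eq_zero_of_sum_fst_ne_zero {G U' : Type*} [AddCommGroup U'] [Module 𝕂 U'] {a : ℕ}
    {C : (ℕ → G) → (ℕ → V) → U'} (hC : IsML 𝕂 a C) {x : ℕ → ℤ × (Fin n → ℤ)}
    {Z : ℕ → V × W} (hZ : ∀ i, Z i ∈ EgrP 𝕂 n grV grW (x i))
    (hs : ∑ i ∈ range a, (x i).1 ≠ 0) (y : ℕ → G) : C y (fun i => (Z i).1) = 0 := by
  obtain ⟨i, hi, hne⟩ := exists_ne_zero_of_sum_ne_zero hs
  exact hC.map_coord_zero y (mem_range.mp hi) (fst_eq_zero_of_mem_EgrP (hZ i) hne)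

lemma MDeg.inl_comp {a : ℕ} {K₀ : (ℕ → (Fin n → ℤ)) → (ℕ → V) → V}
    (hK₀ : MDeg 𝕂 grV a c K₀) :
    MDeg 𝕂 (EgrP 𝕂 n grV grW) a (0, c)
      (fun x Z => (K₀ (fun i => (x i).2) (fun i => (Z i).1), 0)) := by
  refine ⟨hK₀.1.comp _ (LinearMap.fst 𝕂 V W) (LinearMap.inl 𝕂 V W), fun x Z hZ => ?_⟩
  rw [sum_add_eq_mk, add_zero]
  by_cases hs : ∑ i ∈ range a, (x i).1 = 0
  · rw [hs]
    exact inl_mem_EgrP (hK₀.2 _ _ fun i => fst_mem_of_mem_EgrP (hZ i))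
  · show (K₀ _ _, (0 : W)) ∈ _
    rw [hK₀.1.eq_zero_of_sum_fst_ne_zero hZ hs, Prod.mk_zero_zero]
    exact zero_mem _

lemma LDeg.mdeg_KCof {a : ℕ} {C : (ℕ → (Fin n → ℤ)) → (ℕ → V) → W}
    (hC : LDeg 𝕂 n grV grW a c C) : MDeg 𝕂 (EgrP 𝕂 n grV grW) a (1, c) (KCof n C) := by
  refine ⟨hC.1.comp _ (LinearMap.fst 𝕂 V W) (LinearMap.inr 𝕂 V W), fun x Z hZ => ?_⟩
  rw [sum_add_eq_mk]
  by_cases hs : ∑ i ∈ range a, (x i).1 = 0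
  · rw [hs, zero_add]
    exact inr_mem_EgrP (hC.2 _ _ fun i => fst_mem_of_mem_EgrP (hZ i))
  · rw [KCof, hC.1.eq_zero_of_sum_fst_ne_zero hZ hs, Prod.mk_zero_zero]
    exact zero_mem _

/-- The summand of `M^{(k,0,c)}(E)` in which the `p`-th argument comes from `W`. -/
def slotMap (p : ℕ) (C : (ℕ → (Fin n → ℤ)) → (ℕ → V) → W → W) :
    (ℕ → ℤ × (Fin n → ℤ)) → (ℕ → V × W) → V × W :=
  fun x Z => (0, C (fun i => (delAt p x i).2) (fun i => (delAt p Z i).1) (Z p).2)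

lemma LEDeg.mdeg_slotMap {k : ℕ} {C : (ℕ → (Fin n → ℤ)) → (ℕ → V) → W → W}
    (hC : LEDeg 𝕂 n grV grW k c C) {p : ℕ} (hp : p ≤ k) :
    MDeg 𝕂 (EgrP 𝕂 n grV grW) (k + 1) (0, c) (slotMap p C) := by
  have hlin : ∀ x X, IsLinearMap 𝕂 (C x X) := hC.2.2.2.1
  let F : (ℕ → ℤ × (Fin n → ℤ)) → (ℕ → V × W) → V × W → V × W :=
    fun x Z Y => (0, C (fun i => (x i).2) (fun i => (Z i).1) Y.2)
  have hF : IsML 𝕂 k F := IsML.pi fun Y => hC.isML.comp _ (LinearMap.fst 𝕂 V W)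
    (LinearMap.inr 𝕂 V W ∘ₗ LinearMap.proj Y.2)
  have hFlin : ∀ x Z, IsLinearMap 𝕂 (F x Z) := fun x Z =>
    (LinearMap.inr 𝕂 V W ∘ₗ (hlin _ _).mk' _ ∘ₗ LinearMap.snd 𝕂 V W).isLinear
  refine ⟨hF.comp_delAt hFlin hp, fun x Z hZ => ?_⟩
  have hZ' : ∀ i, delAt p Z i ∈ EgrP 𝕂 n grV grW (delAt p x i) := fun i => by
    simp only [delAt]
    split_ifs <;> exact hZ _
  by_cases hs : ∑ i ∈ range k, (delAt p x i).1 = 0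
  · by_cases h1 : (x p).1 = 1
    · have hdeg : ∑ i ∈ range (k + 1), x i + (0, c)
          = (1, ∑ i ∈ range k, (delAt p x i).2 + c + (x p).2) := by
        rw [sum_range_succ_eq_add_sum_delAt hp]
        refine Prod.ext ?_ ?_
        · simp [Prod.fst_sum, hs, h1]
        · simp only [Prod.snd_add, Prod.snd_sum]
          abel
      rw [hdeg]
      exact inr_mem_EgrP (hC.2.2.2.2 _ _ (fun i => fst_mem_of_mem_EgrP (hZ' i)) _ _
        (snd_mem_of_mem_EgrP (hZ p)))
    · rw [slotMap, snd_eq_zero_of_mem_EgrP (hZ p) h1, (hlin _ _).map_zero, Prod.mk_zero_zero]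
      exact zero_mem _
  · rw [slotMap, hC.isML.eq_zero_of_sum_fst_ne_zero hZ' hs, Pi.zero_apply, Prod.mk_zero_zero]
    exact zero_mem _

lemma MDeg.restrict_mem {a : ℕ} {q : ℤ} (hK : MDeg 𝕂 (EgrP 𝕂 n grV grW) a (q, c) K)
    {x : ℕ → (Fin n → ℤ)} {X : ℕ → V} (hX : ∀ i, X i ∈ grV (x i)) :
    K (fun i => (0, x i)) (fun i => (X i, 0)) ∈ EgrP 𝕂 n grV grW (q, ∑ i ∈ range a, x i + c) := by
  simpa [sum_add_eq_mk] using hK.2 _ _ fun i => inl_mem_EgrP (hX i)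

lemma MDeg.ins1_mem {k p : ℕ} (hK : MDeg 𝕂 (EgrP 𝕂 n grV grW) (k + 1) (0, c) K) (hp : p ≤ k)
    {x : ℕ → (Fin n → ℤ)} {X : ℕ → V} {y : Fin n → ℤ} {Y : W} (hX : ∀ i, X i ∈ grV (x i))
    (hY : Y ∈ grW y) :
    K (ins1 p (1, y) (fun l => (0, x l))) (ins1 p (0, Y) (fun l => (X l, 0)))
      ∈ EgrP 𝕂 n grV grW (1, ∑ i ∈ range k, x i + c + y) := by
  have h := hK.2 (ins1 p (1, y) fun l => (0, x l)) (ins1 p (0, Y) fun l => (X l, 0)) fun i => by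
    simp only [ins1]
    split_ifs
    exacts [inl_mem_EgrP (hX i), inr_mem_EgrP hY, inl_mem_EgrP (hX _)]
  have hdeg : ((1, y) + ∑ l ∈ range k, ((0 : ℤ), x l)) + (0, c)
      = (1, ∑ i ∈ range k, x i + c + y) :=
    Prod.ext (by simp [Prod.fst_sum]) (by simp only [Prod.snd_add, Prod.snd_sum]; abel)
  rwa [sum_range_succ_ins1 hp, hdeg] at h

lemma MDeg.ldeg_snd_restrict {a : ℕ} (hK : MDeg 𝕂 (EgrP 𝕂 n grV grW) a (1, c) K) :
    LDeg 𝕂 n grV grW a c (fun x X => (K (fun i => (0, x i)) (fun i => (X i, 0))).2) :=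
  ⟨hK.1.comp _ (LinearMap.inl 𝕂 V W) (LinearMap.snd 𝕂 V W),
    fun _ _ hX => snd_mem_of_mem_EgrP (hK.restrict_mem hX)⟩

lemma MDeg.mdeg_fst_restrict {a : ℕ} (hK : MDeg 𝕂 (EgrP 𝕂 n grV grW) a (0, c) K) :
    MDeg 𝕂 grV a c (fun x X => (K (fun i => (0, x i)) (fun i => (X i, 0))).1) :=
  ⟨hK.1.comp _ (LinearMap.inl 𝕂 V W) (LinearMap.fst 𝕂 V W),
    fun _ _ hX => fst_mem_of_mem_EgrP (hK.restrict_mem hX)⟩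

/-- The component of `K` in which the `p`-th argument comes from `W`; since `K` ignores the
degree sequence, it is evaluated at degrees `0`. -/
def slotRestrict (K : (ℕ → ℤ × (Fin n → ℤ)) → (ℕ → V × W) → V × W) (p : ℕ) :
    (ℕ → (Fin n → ℤ)) → (ℕ → V) → W → W :=
  fun _ X Y => (K (fun _ => 0) (ins1 p (0, Y) (fun l => (X l, 0)))).2

lemma MDeg.apply_ins1_eq_slotRestrict {k p : ℕ} (hK : MDeg 𝕂 (EgrP 𝕂 n grV grW) (k + 1) (0, c) K)
    (hp : p ≤ k) {x : ℕ → (Fin n → ℤ)} {X : ℕ → V} {y : Fin n → ℤ} {Y : W}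
    (hX : ∀ i, X i ∈ grV (x i)) (hY : Y ∈ grW y) :
    K (ins1 p (1, y) (fun l => (0, x l))) (ins1 p (0, Y) (fun l => (X l, 0)))
      = (0, slotRestrict K p x X Y) :=
  Prod.ext (fst_eq_zero_of_mem_EgrP (hK.ins1_mem hp hX hY) one_ne_zero)
    (show _ = (K (fun _ => 0) _).2 from congrArg Prod.snd (hK.1.1 _ _ _))

lemma MDeg.ledeg_slotRestrict {k p : ℕ} (hK : MDeg 𝕂 (EgrP 𝕂 n grV grW) (k + 1) (0, c) K)
    (hp : p ≤ k) : LEDeg 𝕂 n grV grW k c (slotRestrict K p) := by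
  obtain ⟨hdeg, hloc, hlin⟩ : IsML 𝕂 k (slotRestrict K p) := IsML.pi fun Y =>
    (hK.1.comp_ins1 hp (fun x => x) (0, Y)).comp (fun _ _ => 0) (LinearMap.inl 𝕂 V W)
      (LinearMap.snd 𝕂 V W)
  refine ⟨hdeg, hloc, hlin, fun x X => ?_, fun x X hX y Y hY => ?_⟩
  · have h := hK.1.isLinearMap_update (fun _ => 0) (ins1 p 0 (fun l => (X l, 0))) (i := p)
      (by omega)
    simp only [update_ins1] at h
    exact (LinearMap.snd 𝕂 V W ∘ₗ h.mk' _ ∘ₗ LinearMap.inr 𝕂 V W).isLinear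
  · have h := snd_mem_of_mem_EgrP (hK.ins1_mem hp hX hY)
    rwa [hK.apply_ins1_eq_slotRestrict hp hX hY] at h

theorem MDeg.existsUnique_ldeg (htopV : iSup grV = ⊤) {a : ℕ}
    (hK : MDeg 𝕂 (EgrP 𝕂 n grV grW) a (1, c) K) :
    ∃! C : (ℕ → (Fin n → ℤ)) → (ℕ → V) → W,
      LDeg 𝕂 n grV grW a c C ∧
      ∀ (x : ℕ → (Fin n → ℤ)) (X : ℕ → V), (∀ i, X i ∈ grV (x i)) →
        K (fun i => (0, x i)) (fun i => (X i, 0)) = (0, C x X) :=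
  ⟨_, ⟨hK.ldeg_snd_restrict,
      fun _ _ hX => Prod.ext (fst_eq_zero_of_mem_EgrP (hK.restrict_mem hX) one_ne_zero) rfl⟩,
    fun _ ⟨hC, h⟩ => IsML.eq_of_eqOn_homogeneous htopV hC.1 hK.ldeg_snd_restrict.1
      fun x X hX => (congrArg Prod.snd (h x X hX)).symm⟩

theorem MDeg.existsUnique_mdeg_ledeg (htopV : iSup grV = ⊤) (htopW : iSup grW = ⊤) {k : ℕ}
    (hK : MDeg 𝕂 (EgrP 𝕂 n grV grW) (k + 1) (0, c) K) :
    ∃! KC : ((ℕ → (Fin n → ℤ)) → (ℕ → V) → V)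
        × (Fin (k + 1) → ((ℕ → (Fin n → ℤ)) → (ℕ → V) → W → W)),
      (MDeg 𝕂 grV (k + 1) c KC.1 ∧ ∀ p, LEDeg 𝕂 n grV grW k c (KC.2 p)) ∧
      (∀ (x : ℕ → (Fin n → ℤ)) (X : ℕ → V), (∀ i, X i ∈ grV (x i)) →
        K (fun i => (0, x i)) (fun i => (X i, 0)) = (KC.1 x X, 0)) ∧
      (∀ (p : Fin (k + 1)) (x : ℕ → (Fin n → ℤ)) (X : ℕ → V) (y : Fin n → ℤ) (Y : W),
        (∀ i, X i ∈ grV (x i)) → Y ∈ grW y →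
        K (ins1 p (1, y) (fun l => (0, x l))) (ins1 p (0, Y) (fun l => (X l, 0)))
          = (0, KC.2 p x X Y)) := by
  have hp : ∀ p : Fin (k + 1), (p : ℕ) ≤ k := fun p => Nat.le_of_lt_succ p.isLt
  refine ⟨(fun x X => (K (fun i => (0, x i)) (fun i => (X i, 0))).1,
      fun p => slotRestrict K p),
    ⟨⟨hK.mdeg_fst_restrict, fun p => hK.ledeg_slotRestrict (hp p)⟩,
      fun _ _ hX => Prod.ext rfl (snd_eq_zero_of_mem_EgrP (hK.restrict_mem hX) zero_ne_one),
      fun p _ _ _ _ hX hY => hK.apply_ins1_eq_slotRestrict (hp p) hX hY⟩, ?_⟩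
  rintro ⟨K₀, C⟩ ⟨⟨hK₀, hC⟩, h₀, hC'⟩
  refine Prod.ext (IsML.eq_of_eqOn_homogeneous htopV hK₀.1 hK.mdeg_fst_restrict.1
    fun x X hX => (congrArg Prod.fst (h₀ x X hX)).symm) (funext fun p => ?_)
  refine IsML.eq_of_eqOn_homogeneous htopV (hC p).isML
    (hK.ledeg_slotRestrict (hp p)).isML fun x X hX => ?_
  exact IsLinearMap.eq_of_eqOn_homogeneous htopW ((hC p).2.2.2.1 x X)
    ((hK.ledeg_slotRestrict (hp p)).2.2.2.1 x X) fun y Y hY =>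
      congrArg Prod.snd
        ((hC' p x X y Y hX hY).symm.trans (hK.apply_ins1_eq_slotRestrict (hp p) hX hY))

theorem exists_mdeg_of_mdeg_ledeg {k : ℕ} {K₀ : (ℕ → (Fin n → ℤ)) → (ℕ → V) → V}
    {C : Fin (k + 1) → ((ℕ → (Fin n → ℤ)) → (ℕ → V) → W → W)}
    (hK₀ : MDeg 𝕂 grV (k + 1) c K₀) (hC : ∀ p, LEDeg 𝕂 n grV grW k c (C p)) :
    ∃ K : (ℕ → ℤ × (Fin n → ℤ)) → (ℕ → V × W) → V × W,
      MDeg 𝕂 (EgrP 𝕂 n grV grW) (k + 1) (0, c) K ∧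
      (∀ (x : ℕ → (Fin n → ℤ)) (X : ℕ → V), (∀ i, X i ∈ grV (x i)) →
        K (fun i => (0, x i)) (fun i => (X i, 0)) = (K₀ x X, 0)) ∧
      (∀ (p : Fin (k + 1)) (x : ℕ → (Fin n → ℤ)) (X : ℕ → V) (y : Fin n → ℤ) (Y : W),
        (∀ i, X i ∈ grV (x i)) → Y ∈ grW y →
        K (ins1 p (1, y) (fun l => (0, x l))) (ins1 p (0, Y) (fun l => (X l, 0)))
          = (0, C p x X Y)) := by
  have hlin : ∀ p x X, IsLinearMap 𝕂 (C p x X) := fun p => (hC p).2.2.2.1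
  refine ⟨fun x Z => (K₀ (fun i => (x i).2) (fun i => (Z i).1), 0)
      + ∑ p : Fin (k + 1), slotMap p (C p) x Z,
    hK₀.inl_comp.add (MDeg.sum _ fun p _ => (hC p).mdeg_slotMap (Nat.le_of_lt_succ p.isLt)),
    fun x X hX => ?_, fun p x X y Y hX hY => ?_⟩
  · simp [slotMap, (hlin _ _ _).map_zero]
  · dsimp only
    rw [sum_eq_single_of_mem p (mem_univ p) fun q _ hqp => ?_]
    · rw [hK₀.1.map_coord_zero _ p.isLt (by simp only [ins1_self])]
      simp [slotMap, delAt_ins1, ins1_self]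
    · rw [slotMap, ins1_apply_of_ne (Fin.val_ne_of_ne hqp), (hlin _ _ _).map_zero,
        Prod.mk_zero_zero]

lemma sgn_mul_self (z : ℤ) : sgn z * sgn z = 1 := by
  rw [sgn, ← pow_add]
  exact Even.neg_one_pow ⟨z.natAbs, rfl⟩

theorem bilinear_decomposition (htopV : iSup grV = ⊤) (htopW : iSup grW = ⊤)
    (P : (V × W) →ₗ[𝕂] (V × W) →ₗ[𝕂] (V × W))
    (hP : ∀ (g h : ℤ × (Fin n → ℤ)) (u v : V × W),
      u ∈ EgrP 𝕂 n grV grW g → v ∈ EgrP 𝕂 n grV grW h → P u v ∈ EgrP 𝕂 n grV grW (g + h)) :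
    (∀ X₁ X₂ : V, P (X₁, 0) (X₂, 0) = (bmu P X₁ X₂, 0)) ∧
    (∀ (X : V) (Y : W), P (X, 0) (0, Y) = (0, blam P X Y)) ∧
    (∀ (x y : Fin n → ℤ) (X : V) (Y : W), X ∈ grV x → Y ∈ grW y →
      P (0, Y) (X, 0) = (0, sgn (pairZ n x y) • brho n P x y X Y)) := by
  have hmu : (P.compl₁₂ (LinearMap.inl 𝕂 V W) (LinearMap.inl 𝕂 V W)).compr₂
      (LinearMap.snd 𝕂 V W) = 0 :=
    LinearMap.eq_zero_of_homogeneous htopV htopV fun _ _ _ hX₁ _ hX₂ =>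
      snd_eq_zero_of_mem_EgrP (hP _ _ _ _ (inl_mem_EgrP hX₁) (inl_mem_EgrP hX₂)) (by simp)
  have hlam : (P.compl₁₂ (LinearMap.inl 𝕂 V W) (LinearMap.inr 𝕂 V W)).compr₂
      (LinearMap.fst 𝕂 V W) = 0 :=
    LinearMap.eq_zero_of_homogeneous htopV htopW fun _ _ _ hX _ hY =>
      fst_eq_zero_of_mem_EgrP (hP _ _ _ _ (inl_mem_EgrP hX) (inr_mem_EgrP hY)) (by simp)
  refine ⟨fun X₁ X₂ => Prod.ext rfl (LinearMap.congr_fun₂ hmu X₁ X₂),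
    fun X Y => Prod.ext (LinearMap.congr_fun₂ hlam X Y) rfl,
    fun x y X Y hX hY => Prod.ext ?_ ?_⟩
  · exact fst_eq_zero_of_mem_EgrP (hP _ _ _ _ (inr_mem_EgrP hY) (inl_mem_EgrP hX)) (by simp)
  · rw [brho, smul_smul, sgn_mul_self, one_smul]

end SumSpace

theorem stmt13_general {𝕂 : Type} [Field 𝕂] (n : ℕ)
    {V W : Type} [AddCommGroup V] [Module 𝕂 V] [AddCommGroup W] [Module 𝕂 W]
    (grV : (Fin n → ℤ) → Submodule 𝕂 V) (hgrV : DirectSum.IsInternal grV)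
    (grW : (Fin n → ℤ) → Submodule 𝕂 W) (hgrW : DirectSum.IsInternal grW)
    (k : ℕ) (c : Fin n → ℤ) :
    -- `M^{(k,q,*)}(E) = 0` for `q > 1`:
    (∀ q : ℤ, 1 < q →
      ∀ K : (ℕ → ℤ × (Fin n → ℤ)) → (ℕ → V × W) → V × W,
        MDeg 𝕂 (EgrP 𝕂 n grV grW) (k + 1) (q, c) K →
        ∀ x X, (∀ i, X i ∈ EgrP 𝕂 n grV grW (x i)) → K x X = 0) ∧
    -- `M^{(k,1,c)}(E) ≅ L^{(k+1,c)}(V,W)`: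
    ((∀ K : (ℕ → ℤ × (Fin n → ℤ)) → (ℕ → V × W) → V × W,
        MDeg 𝕂 (EgrP 𝕂 n grV grW) (k + 1) ((1 : ℤ), c) K →
        ∃! C : (ℕ → (Fin n → ℤ)) → (ℕ → V) → W,
          LDeg 𝕂 n grV grW (k + 1) c C ∧
          ∀ (x : ℕ → (Fin n → ℤ)) (X : ℕ → V), (∀ i, X i ∈ grV (x i)) →
            K (fun i => ((0 : ℤ), x i)) (fun i => (X i, (0 : W))) = ((0 : V), C x X)) ∧
     (∀ C : (ℕ → (Fin n → ℤ)) → (ℕ → V) → W, LDeg 𝕂 n grV grW (k + 1) c C →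
        ∃ K : (ℕ → ℤ × (Fin n → ℤ)) → (ℕ → V × W) → V × W,
          MDeg 𝕂 (EgrP 𝕂 n grV grW) (k + 1) ((1 : ℤ), c) K ∧
          ∀ (x : ℕ → (Fin n → ℤ)) (X : ℕ → V), (∀ i, X i ∈ grV (x i)) →
            K (fun i => ((0 : ℤ), x i)) (fun i => (X i, (0 : W))) = ((0 : V), C x X))) ∧
    -- `M^{(k,0,c)}(E) ≅ M^{(k,c)}(V) ⊕ ⊕^{k+1} L^{(k,c)}(V, End W)`:
    ((∀ K : (ℕ → ℤ × (Fin n → ℤ)) → (ℕ → V × W) → V × W,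
        MDeg 𝕂 (EgrP 𝕂 n grV grW) (k + 1) ((0 : ℤ), c) K →
        ∃! KC : ((ℕ → (Fin n → ℤ)) → (ℕ → V) → V)
            × (Fin (k + 1) → ((ℕ → (Fin n → ℤ)) → (ℕ → V) → W → W)),
          (MDeg 𝕂 grV (k + 1) c KC.1 ∧ ∀ p, LEDeg 𝕂 n grV grW k c (KC.2 p)) ∧
          (∀ (x : ℕ → (Fin n → ℤ)) (X : ℕ → V), (∀ i, X i ∈ grV (x i)) →
            K (fun i => ((0 : ℤ), x i)) (fun i => (X i, (0 : W)))
              = (KC.1 x X, (0 : W))) ∧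
          (∀ (p : Fin (k + 1)) (x : ℕ → (Fin n → ℤ)) (X : ℕ → V)
              (y : Fin n → ℤ) (Y : W),
            (∀ i, X i ∈ grV (x i)) → Y ∈ grW y →
            K (ins1 (p : ℕ) ((1 : ℤ), y) (fun l => ((0 : ℤ), x l)))
              (ins1 (p : ℕ) ((0 : V), Y) (fun l => (X l, (0 : W))))
              = ((0 : V), KC.2 p x X Y))) ∧
     (∀ (K₀ : (ℕ → (Fin n → ℤ)) → (ℕ → V) → V)
        (C : Fin (k + 1) → ((ℕ → (Fin n → ℤ)) → (ℕ → V) → W → W)),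
        MDeg 𝕂 grV (k + 1) c K₀ → (∀ p, LEDeg 𝕂 n grV grW k c (C p)) →
        ∃ K : (ℕ → ℤ × (Fin n → ℤ)) → (ℕ → V × W) → V × W,
          MDeg 𝕂 (EgrP 𝕂 n grV grW) (k + 1) ((0 : ℤ), c) K ∧
          (∀ (x : ℕ → (Fin n → ℤ)) (X : ℕ → V), (∀ i, X i ∈ grV (x i)) →
            K (fun i => ((0 : ℤ), x i)) (fun i => (X i, (0 : W))) = (K₀ x X, (0 : W))) ∧
          (∀ (p : Fin (k + 1)) (x : ℕ → (Fin n → ℤ)) (X : ℕ → V)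
              (y : Fin n → ℤ) (Y : W),
            (∀ i, X i ∈ grV (x i)) → Y ∈ grW y →
            K (ins1 (p : ℕ) ((1 : ℤ), y) (fun l => ((0 : ℤ), x l)))
              (ins1 (p : ℕ) ((0 : V), Y) (fun l => (X l, (0 : W))))
              = ((0 : V), C p x X Y)))) ∧
    -- a bilinear `P` of weight `(0,0)` corresponds exactly to `μ + λ + ρ`:
    (∀ P : (V × W) →ₗ[𝕂] (V × W) →ₗ[𝕂] (V × W),
      (∀ (g h : ℤ × (Fin n → ℤ)) (u v : V × W),
          u ∈ EgrP 𝕂 n grV grW g → v ∈ EgrP 𝕂 n grV grW h →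
          P u v ∈ EgrP 𝕂 n grV grW (g + h)) →
      (∀ X₁ X₂ : V, P (X₁, 0) (X₂, 0) = (bmu P X₁ X₂, (0 : W))) ∧
      (∀ (X : V) (Y : W), P (X, 0) ((0 : V), Y) = ((0 : V), blam P X Y)) ∧
      (∀ (x y : Fin n → ℤ) (X : V) (Y : W), X ∈ grV x → Y ∈ grW y →
        P ((0 : V), Y) (X, (0 : W))
          = ((0 : V), sgn (pairZ n x y) • brho n P x y X Y))) := by
  have htopV := hgrV.submodule_iSup_eq_top
  have htopW := hgrW.submodule_iSup_eq_top
  exact ⟨fun q hq K hK x X hX => hK.eq_zero_of_one_lt hq x X hX,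
    ⟨fun K hK => hK.existsUnique_ldeg htopV,
      fun C hC => ⟨KCof n C, hC.mdeg_KCof, fun _ _ _ => rfl⟩⟩,
    ⟨fun K hK => hK.existsUnique_mdeg_ledeg htopV htopW,
      fun K₀ C hK₀ hC => exists_mdeg_of_mdeg_ledeg hK₀ hC⟩,
    fun P hP => bilinear_decomposition htopV htopW P hP⟩

/-- Decomposition of the homogeneous components of `M(E)` for
`E = V ⊕ W` (`E^{(0,*)} = V`, `E^{(1,*)} = W`): for form degree `k` (arity `k+1`) and
weight `(q,c)`;  `M^{(k,q,*)}(E) = 0` for `q > 1`;  `M^{(k,1,c)}(E) ≅ L^{(k+1,c)}(V,W)`;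
`M^{(k,0,c)}(E) ≅ M^{(k,c)}(V) ⊕ ⊕^{k+1} L^{(k,c)}(V,End(W))` — each isomorphism being
expressed by a unique correspondence on homogeneous arguments — and a bilinear
`P ∈ M^{(1,(0,0))}(E)` corresponds exactly to the triple `μ + λ + ρ`. -/
theorem stmt13 {𝕂 : Type} [Field 𝕂] [CharZero 𝕂] (n : ℕ)
    {V W : Type} [AddCommGroup V] [Module 𝕂 V] [AddCommGroup W] [Module 𝕂 W]
    (grV : (Fin n → ℤ) → Submodule 𝕂 V) (hgrV : DirectSum.IsInternal grV)
    (grW : (Fin n → ℤ) → Submodule 𝕂 W) (hgrW : DirectSum.IsInternal grW)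
    (k : ℕ) (c : Fin n → ℤ) :
    -- `M^{(k,q,*)}(E) = 0` for `q > 1`:
    (∀ q : ℤ, 1 < q →
      ∀ K : (ℕ → ℤ × (Fin n → ℤ)) → (ℕ → V × W) → V × W,
        MDeg 𝕂 (EgrP 𝕂 n grV grW) (k + 1) (q, c) K →
        ∀ x X, (∀ i, X i ∈ EgrP 𝕂 n grV grW (x i)) → K x X = 0) ∧
    -- `M^{(k,1,c)}(E) ≅ L^{(k+1,c)}(V,W)`:
    ((∀ K : (ℕ → ℤ × (Fin n → ℤ)) → (ℕ → V × W) → V × W,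
        MDeg 𝕂 (EgrP 𝕂 n grV grW) (k + 1) ((1 : ℤ), c) K →
        ∃! C : (ℕ → (Fin n → ℤ)) → (ℕ → V) → W,
          LDeg 𝕂 n grV grW (k + 1) c C ∧
          ∀ (x : ℕ → (Fin n → ℤ)) (X : ℕ → V), (∀ i, X i ∈ grV (x i)) →
            K (fun i => ((0 : ℤ), x i)) (fun i => (X i, (0 : W))) = ((0 : V), C x X)) ∧
     (∀ C : (ℕ → (Fin n → ℤ)) → (ℕ → V) → W, LDeg 𝕂 n grV grW (k + 1) c C →
        ∃ K : (ℕ → ℤ × (Fin n → ℤ)) → (ℕ → V × W) → V × W,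
          MDeg 𝕂 (EgrP 𝕂 n grV grW) (k + 1) ((1 : ℤ), c) K ∧
          ∀ (x : ℕ → (Fin n → ℤ)) (X : ℕ → V), (∀ i, X i ∈ grV (x i)) →
            K (fun i => ((0 : ℤ), x i)) (fun i => (X i, (0 : W))) = ((0 : V), C x X))) ∧
    -- `M^{(k,0,c)}(E) ≅ M^{(k,c)}(V) ⊕ ⊕^{k+1} L^{(k,c)}(V, End W)`:
    ((∀ K : (ℕ → ℤ × (Fin n → ℤ)) → (ℕ → V × W) → V × W,
        MDeg 𝕂 (EgrP 𝕂 n grV grW) (k + 1) ((0 : ℤ), c) K →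
        ∃! KC : ((ℕ → (Fin n → ℤ)) → (ℕ → V) → V)
            × (Fin (k + 1) → ((ℕ → (Fin n → ℤ)) → (ℕ → V) → W → W)),
          (MDeg 𝕂 grV (k + 1) c KC.1 ∧ ∀ p, LEDeg 𝕂 n grV grW k c (KC.2 p)) ∧
          (∀ (x : ℕ → (Fin n → ℤ)) (X : ℕ → V), (∀ i, X i ∈ grV (x i)) →
            K (fun i => ((0 : ℤ), x i)) (fun i => (X i, (0 : W)))
              = (KC.1 x X, (0 : W))) ∧
          (∀ (p : Fin (k + 1)) (x : ℕ → (Fin n → ℤ)) (X : ℕ → V)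
              (y : Fin n → ℤ) (Y : W),
            (∀ i, X i ∈ grV (x i)) → Y ∈ grW y →
            K (ins1 (p : ℕ) ((1 : ℤ), y) (fun l => ((0 : ℤ), x l)))
              (ins1 (p : ℕ) ((0 : V), Y) (fun l => (X l, (0 : W))))
              = ((0 : V), KC.2 p x X Y))) ∧
     (∀ (K₀ : (ℕ → (Fin n → ℤ)) → (ℕ → V) → V)
        (C : Fin (k + 1) → ((ℕ → (Fin n → ℤ)) → (ℕ → V) → W → W)),
        MDeg 𝕂 grV (k + 1) c K₀ → (∀ p, LEDeg 𝕂 n grV grW k c (C p)) →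
        ∃ K : (ℕ → ℤ × (Fin n → ℤ)) → (ℕ → V × W) → V × W,
          MDeg 𝕂 (EgrP 𝕂 n grV grW) (k + 1) ((0 : ℤ), c) K ∧
          (∀ (x : ℕ → (Fin n → ℤ)) (X : ℕ → V), (∀ i, X i ∈ grV (x i)) →
            K (fun i => ((0 : ℤ), x i)) (fun i => (X i, (0 : W))) = (K₀ x X, (0 : W))) ∧
          (∀ (p : Fin (k + 1)) (x : ℕ → (Fin n → ℤ)) (X : ℕ → V)
              (y : Fin n → ℤ) (Y : W),
            (∀ i, X i ∈ grV (x i)) → Y ∈ grW y →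
            K (ins1 (p : ℕ) ((1 : ℤ), y) (fun l => ((0 : ℤ), x l)))
              (ins1 (p : ℕ) ((0 : V), Y) (fun l => (X l, (0 : W))))
              = ((0 : V), C p x X Y)))) ∧
    -- a bilinear `P` of weight `(0,0)` corresponds exactly to `μ + λ + ρ`:
    (∀ P : (V × W) →ₗ[𝕂] (V × W) →ₗ[𝕂] (V × W),
      (∀ (g h : ℤ × (Fin n → ℤ)) (u v : V × W),
          u ∈ EgrP 𝕂 n grV grW g → v ∈ EgrP 𝕂 n grV grW h →
          P u v ∈ EgrP 𝕂 n grV grW (g + h)) →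
      (∀ X₁ X₂ : V, P (X₁, 0) (X₂, 0) = (bmu P X₁ X₂, (0 : W))) ∧
      (∀ (X : V) (Y : W), P (X, 0) ((0 : V), Y) = ((0 : V), blam P X Y)) ∧
      (∀ (x y : Fin n → ℤ) (X : V) (Y : W), X ∈ grV x → Y ∈ grW y →
        P ((0 : V), Y) (X, (0 : W))
          = ((0 : V), sgn (pairZ n x y) • brho n P x y X Y))) :=
  stmt13_general n grV hgrV grW hgrW k c

end NR
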